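/- Let G = {*x₁, …, *xₙ} : 1 be the ordinal sum of the game whose options (for both players) are the nimbers *x₁, …, *xₙ with the number 1 (i.e. a mutant flower of stem the superstar on {x₁,…,xₙ} and blossom 1), where mex{x₁,…,xₙ} > 0. Then the atomic weight of G is 1. Symmetrically, the atomic weight of {*x₁, …, *xₙ} : (−1) is −1. -/

import Mathlib

namespace SetTheory

universe v

/-- Pre-games (ported from the older Mathlib, where `SetTheory.PGame` was defined). -/
inductive PGame : Type (v + 1)
  | mk : ∀ α β : Type v, (α → PGame) → (β → PGame) → PGame

namespace PGame

def LeftMoves : PGame → Type v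
  | mk l _ _ _ => l

def RightMoves : PGame → Type v
  | mk _ r _ _ => r

def moveLeft : ∀ g : PGame, LeftMoves g → PGame
  | mk _ _ L _ => L

def moveRight : ∀ g : PGame, RightMoves g → PGame
  | mk _ _ _ R => R

inductive IsOption : PGame → PGame → Prop
  | moveLeft {x : PGame} (i : x.LeftMoves) : IsOption (x.moveLeft i) x
  | moveRight {x : PGame} (i : x.RightMoves) : IsOption (x.moveRight i) x

theorem wf_isOption : WellFounded IsOption :=
  ⟨fun x => by
    induction x with
    | mk l r L R IHl IHr =>
      refine ⟨_, fun y h => ?_⟩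
      cases h with
      | moveLeft i => exact IHl i
      | moveRight j => exact IHr j⟩

def Subsequent : PGame → PGame → Prop :=
  Relation.TransGen IsOption

theorem wf_subsequent : WellFounded Subsequent :=
  wf_isOption.transGen

instance : WellFoundedRelation PGame :=
  ⟨_, wf_subsequent⟩

theorem Subsequent.moveLeft (x : PGame) (i : x.LeftMoves) : Subsequent (x.moveLeft i) x :=
  Relation.TransGen.single (IsOption.moveLeft i)

theorem Subsequent.moveRight (x : PGame) (j : x.RightMoves) : Subsequent (x.moveRight j) x :=
  Relation.TransGen.single (IsOption.moveRight j)

instance le : LE PGame :=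
  ⟨@Sym2.GameAdd.recursion _ _ (fun _ _ => Prop) wf_isOption fun x y le =>
      (∀ i, ¬le y (x.moveLeft i) (Sym2.GameAdd.snd_fst <| IsOption.moveLeft i)) ∧
        ∀ j, ¬le (y.moveRight j) x (Sym2.GameAdd.fst_snd <| IsOption.moveRight j)⟩

instance : LT PGame :=
  ⟨fun x y => x ≤ y ∧ ¬y ≤ x⟩

instance : Zero PGame :=
  ⟨⟨PEmpty, PEmpty, PEmpty.elim, PEmpty.elim⟩⟩

instance : One PGame :=
  ⟨⟨PUnit, PEmpty, fun _ => 0, PEmpty.elim⟩⟩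

def neg : PGame → PGame
  | ⟨l, r, L, R⟩ => ⟨r, l, fun i => neg (R i), fun i => neg (L i)⟩

instance : Neg PGame :=
  ⟨neg⟩

def addAux {xl xr : Type v} (xL : xl → PGame) (xR : xr → PGame)
    (fL : xl → PGame → PGame) (fR : xr → PGame → PGame) : PGame → PGame
  | mk yl yr yL yR =>
    mk (xl ⊕ yl) (xr ⊕ yr)
      (Sum.elim (fun i => fL i (mk yl yr yL yR)) fun j => addAux xL xR fL fR (yL j))
      (Sum.elim (fun i => fR i (mk yl yr yL yR)) fun j => addAux xL xR fL fR (yR j))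

def add : PGame → PGame → PGame
  | mk _ _ xL xR => addAux xL xR (fun i => add (xL i)) (fun i => add (xR i))

instance : Add PGame :=
  ⟨add⟩

instance : Sub PGame :=
  ⟨fun x y => x + -y⟩

def star : PGame.{v} :=
  ⟨PUnit, PUnit, fun _ => 0, fun _ => 0⟩

noncomputable def nim (o : Ordinal.{v}) : PGame.{v} :=
  ⟨o.ToType, o.ToType,
    fun x => nim (Ordinal.ToType.mk.symm x).val,
    fun x => nim (Ordinal.ToType.mk.symm x).val⟩
termination_by o
decreasing_by all_goals exact (Ordinal.ToType.mk.symm x).prop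

end PGame

end SetTheory

universe v

/-- Nimbers (ported from the older Mathlib): a type synonym of `Ordinal`. -/
def Nimber : Type (v + 1) :=
  Ordinal.{v}

noncomputable instance : ConditionallyCompleteLinearOrderBot Nimber :=
  inferInstanceAs (ConditionallyCompleteLinearOrderBot Ordinal)

instance : One Nimber :=
  ⟨(1 : Ordinal)⟩

open SetTheory PGame

universe u

/-- The four outcome classes of a combinatorial game. -/
inductive Outcome : Type
  | L | N | P | R
deriving DecidableEq

/-- The partial order on outcomes: `R` least, `L` greatest, `N` and `P` incomparable. -/
def Outcome.leB : Outcome → Outcome → Bool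
  | .R, _ => true
  | _, .L => true
  | .N, .N => true
  | .P, .P => true
  | _, _ => false

instance : PartialOrder Outcome where
  le a b := Outcome.leB a b = true
  le_refl a := by cases a <;> rfl
  le_trans a b c := by cases a <;> cases b <;> cases c <;> simp [Outcome.leB]
  le_antisymm a b := by cases a <;> cases b <;> simp [Outcome.leB]

/-- `misereWins true G` : Left, moving first, wins `G` under misère play;
`misereWins false G` : Right, moving first, wins `G` under misère play.
(Under misère play, a player who cannot move wins.) -/
def misereWins : Bool → SetTheory.PGame.{u} → Prop
  | true, G => IsEmpty G.LeftMoves ∨ ∃ i, ¬ misereWins false (G.moveLeft i)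
  | false, G => IsEmpty G.RightMoves ∨ ∃ j, ¬ misereWins true (G.moveRight j)
termination_by _ G => G
decreasing_by all_goals first | exact Subsequent.moveLeft _ _ | exact Subsequent.moveRight _ _

/-- Build an outcome class from the propositions "Left moving first wins" and
"Right moving first wins". -/
noncomputable def outcomeOf (LF RF : Prop) : Outcome := by
  classical exact if LF then (if RF then .N else .L) else (if RF then .R else .P)

/-- The normal-play outcome `o⁺(G)` of a game. -/
noncomputable def normalOutcome (G : PGame) : Outcome :=
  outcomeOf (¬ G ≤ 0) (¬ 0 ≤ G)

/-- The misère-play outcome `o⁻(G)` of a game. -/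
noncomputable def misereOutcome (G : PGame) : Outcome :=
  outcomeOf (misereWins true G) (misereWins false G)

/-- The ordinal sum `G : H` of two games: either move in `G` (destroying the `H` part),
or move in `H` keeping the base `G`. -/
def ordinalSum (G : PGame.{u}) : PGame.{u} → PGame.{u}
  | H => PGame.mk (G.LeftMoves ⊕ H.LeftMoves) (G.RightMoves ⊕ H.RightMoves)
      (Sum.elim G.moveLeft fun i => ordinalSum G (H.moveLeft i))
      (Sum.elim G.moveRight fun j => ordinalSum G (H.moveRight j))
termination_by H => H
decreasing_by all_goals first | exact Subsequent.moveLeft _ _ | exact Subsequent.moveRight _ _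

/-- The game `↑` (up) `= {0 | *}`. -/
def up : PGame.{u} := ⟨PUnit, PUnit, fun _ => 0, fun _ => star⟩

/-- `n` copies of `↑` added together. -/
def nUp : ℕ → PGame.{u}
  | 0 => 0
  | n + 1 => nUp n + up

/-- The integer multiple `w·↑`. -/
def upMul : ℤ → PGame.{u}
  | .ofNat k => nUp k
  | .negSucc k => -(nUp (k + 1))

/-- Finite disjunctive sum of a family of games. -/
def psum : {k : ℕ} → (Fin k → PGame.{u}) → PGame.{u}
  | 0, _ => 0
  | k + 1, f => psum (fun i : Fin k => f i.castSucc) + f (Fin.last k)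

/-- The superstar `{*x₁, …, *xₙ}`: the impartial game whose Left and Right options are
exactly the nimbers `*xᵢ`. -/
noncomputable def superstar {n : ℕ} (x : Fin n → ℕ) : PGame :=
  ⟨Fin n, Fin n, fun i => nim (x i), fun i => nim (x i)⟩

/-- The minimum excludant of a set of naturals. -/
noncomputable def setMex (S : Set ℕ) : ℕ := sInf {n | n ∉ S}

/-- Iterated XOR (nim-sum) of a finite family of naturals. -/
def xorSum : {k : ℕ} → (Fin k → ℕ) → ℕ
  | 0, _ => 0
  | k + 1, f => xorSum (fun i : Fin k => f i.castSucc) ^^^ f (Fin.last k)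

/-- A set of naturals is star-closed if it is closed under XOR with 1. -/
def StarClosedN (S : Set ℕ) : Prop := ∀ a ∈ S, a ^^^ 1 ∈ S

/-- `G` is all-small (dicotic): in every subposition, either both players can move
or neither can. -/
def AllSmall (G : PGame) : Prop :=
  (Nonempty G.LeftMoves ↔ Nonempty G.RightMoves) ∧
    ∀ p, Subsequent p G → (Nonempty p.LeftMoves ↔ Nonempty p.RightMoves)

/-- `G` has (integer) atomic weight `w`, via the remote-star characterization:
for all sufficiently remote `N`, `*N + ↓ < G - w·↑ < *N + ↑`. -/
def HasIntAtomicWeight (G : PGame) (w : ℤ) : Prop :=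
  ∃ N₀ : ℕ, ∀ N : ℕ, N₀ ≤ N →
    nim N + (-up) < G - upMul w ∧ G - upMul w < nim N + up

open Classical in
/-- The misère Grundy value of an (impartial) game: the mex of the misère Grundy values
of its options, except that the empty game has misère Grundy value `1`. -/
noncomputable def misereGrundy : PGame.{u} → Nimber.{u}
  | G =>
    if IsEmpty G.LeftMoves then 1
    else sInf (Set.range fun i => misereGrundy (G.moveLeft i))ᶜ
termination_by G => G
decreasing_by all_goals first | exact Subsequent.moveLeft _ _ | exact Subsequent.moveRight _ _

/-- A set of games closed under disjunctive sum and under taking subpositions. -/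
def SClosed (A : Set PGame) : Prop :=
  (∀ G ∈ A, ∀ H ∈ A, G + H ∈ A) ∧ ∀ G ∈ A, ∀ G', Subsequent G' G → G' ∈ A

/-- `K` is an evil kernel of `A`: setting `G* = G` for `G ∈ K` and `G* = G + *` otherwise,
one has `o⁺(G) = o⁻(G*)` and `o⁻(G) = o⁺(G*)` for all `G ∈ A`. -/
def IsEvilKernel (A K : Set PGame) : Prop :=
  K ⊆ A ∧ ∀ G ∈ A,
    (G ∈ K → normalOutcome G = misereOutcome G ∧ misereOutcome G = normalOutcome G) ∧
    (G ∉ K → normalOutcome G = misereOutcome (G + star) ∧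
      misereOutcome G = normalOutcome (G + star))

/-- `(A, K)` is evilly normal: `A` is closed, `K` is an evil kernel of `A`, and
`G + H ∉ K ↔ (G ∉ K ∧ H ∉ K)` for all `G, H ∈ A`. -/
def EvillyNormal (A K : Set PGame) : Prop :=
  SClosed A ∧ IsEvilKernel A K ∧ ∀ G ∈ A, ∀ H ∈ A, (G + H ∉ K ↔ G ∉ K ∧ H ∉ K)

/-- Normal-play equality of games: `G` and `H` have the same normal-play outcome in
every sum. -/
def NormalEq (G H : PGame) : Prop := ∀ X, normalOutcome (G + X) = normalOutcome (H + X)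

namespace SetTheory
namespace PGame

@[simp] theorem leftMoves_mk {xl xr : Type u} {xL : xl → PGame.{u}} {xR : xr → PGame.{u}} :
    (mk xl xr xL xR).LeftMoves = xl := rfl
@[simp] theorem rightMoves_mk {xl xr : Type u} {xL : xl → PGame.{u}} {xR : xr → PGame.{u}} :
    (mk xl xr xL xR).RightMoves = xr := rfl
@[simp] theorem moveLeft_mk {xl xr : Type u} {xL : xl → PGame.{u}} {xR : xr → PGame.{u}} (i : xl) :
    (mk xl xr xL xR).moveLeft i = xL i := rfl
@[simp] theorem moveRight_mk {xl xr : Type u} {xL : xl → PGame.{u}} {xR : xr → PGame.{u}} (j : xr) :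
    (mk xl xr xL xR).moveRight j = xR j := rfl

/-- The less-or-fuzzy relation. -/
def LF (x y : PGame.{u}) : Prop := ¬ y ≤ x

infixl:50 " ⧏ " => SetTheory.PGame.LF

theorem le_iff_forall_lf {x y : PGame.{u}} :
    x ≤ y ↔ (∀ i, x.moveLeft i ⧏ y) ∧ ∀ j, x ⧏ y.moveRight j := by
  unfold LE.le le
  simp only
  rw [Sym2.GameAdd.recursion_eq]
  rfl

theorem lf_iff_exists_le {x y : PGame.{u}} :
    x ⧏ y ↔ (∃ i, x ≤ y.moveLeft i) ∨ ∃ j, x.moveRight j ≤ y := by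
  unfold LF
  rw [le_iff_forall_lf (x := y) (y := x)]
  unfold LF
  simp only [not_and_or, not_forall, not_not]

theorem zero_le_lf {x : PGame.{u}} : 0 ≤ x ↔ ∀ j, 0 ⧏ x.moveRight j := by
  rw [le_iff_forall_lf]; exact ⟨fun h => h.2, fun h => ⟨fun i => PEmpty.elim i, h⟩⟩

theorem le_zero_lf {x : PGame.{u}} : x ≤ 0 ↔ ∀ i, x.moveLeft i ⧏ 0 := by
  rw [le_iff_forall_lf]; exact ⟨fun h => h.1, fun h => ⟨h, fun j => PEmpty.elim j⟩⟩

theorem zero_lf_le {x : PGame.{u}} : 0 ⧏ x ↔ ∃ i, 0 ≤ x.moveLeft i := by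
  rw [lf_iff_exists_le]
  exact ⟨fun h => h.elim id (fun ⟨j, _⟩ => PEmpty.elim j), Or.inl⟩

theorem lf_zero_le {x : PGame.{u}} : x ⧏ 0 ↔ ∃ j, x.moveRight j ≤ 0 := by
  rw [lf_iff_exists_le]
  exact ⟨fun h => h.elim (fun ⟨i, _⟩ => PEmpty.elim i) id, Or.inr⟩

theorem pg_le_trans_aux {x y z : PGame.{u}}
    (h₁ : ∀ {i}, y ≤ z → z ≤ x.moveLeft i → y ≤ x.moveLeft i)
    (h₂ : ∀ {j}, z.moveRight j ≤ x → x ≤ y → z.moveRight j ≤ y) (hxy : x ≤ y) (hyz : y ≤ z) :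
    x ≤ z :=
  le_iff_forall_lf.2 ⟨fun i h => (le_iff_forall_lf.1 hxy).1 i (h₁ hyz h),
    fun j h => (le_iff_forall_lf.1 hyz).2 j (h₂ h hxy)⟩

theorem pg_le_refl (x : PGame.{u}) : x ≤ x := by
  induction x with
  | mk xl xr xL xR IHl IHr =>
    rw [le_iff_forall_lf]
    exact ⟨fun i => lf_iff_exists_le.2 (Or.inl ⟨i, IHl i⟩),
      fun j => lf_iff_exists_le.2 (Or.inr ⟨j, IHr j⟩)⟩

theorem pg_le_trans_triple (x y z : PGame.{u}) :
    (x ≤ y → y ≤ z → x ≤ z) ∧ (y ≤ z → z ≤ x → y ≤ x) ∧ (z ≤ x → x ≤ y → z ≤ y) := by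
  induction x generalizing y z with
  | mk xl xr xL xR IHxl IHxr =>
  induction y generalizing z with
  | mk yl yr yL yR IHyl IHyr =>
  induction z with
  | mk zl zr zL zR IHzl IHzr =>
  exact ⟨pg_le_trans_aux (fun {i} => (IHxl i _ _).2.1) (fun {j} => (IHzr j).2.2),
    pg_le_trans_aux (fun {i} => (IHyl i _).2.2) (fun {j} => (IHxr j _ _).1),
    pg_le_trans_aux (fun {i} => (IHzl i).1) (fun {j} => (IHyr j _).2.1)⟩

instance : Preorder PGame.{u} where
  le x y := x ≤ y
  lt x y := x < y
  le_refl := pg_le_refl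
  le_trans x y z := (pg_le_trans_triple x y z).1
  lt_iff_le_not_ge _ _ := Iff.rfl

theorem lt_iff_le_and_lf {x y : PGame.{u}} : x < y ↔ x ≤ y ∧ x ⧏ y := Iff.rfl

theorem lf_of_lt {x y : PGame.{u}} (h : x < y) : x ⧏ y := h.2

instance setoid : Setoid PGame.{u} :=
  ⟨fun x y => x ≤ y ∧ y ≤ x,
    ⟨fun x => ⟨le_refl x, le_refl x⟩, fun h => ⟨h.2, h.1⟩,
      fun h1 h2 => ⟨le_trans h1.1 h2.1, le_trans h2.2 h1.2⟩⟩⟩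

theorem equiv_def {x y : PGame.{u}} : x ≈ y ↔ x ≤ y ∧ y ≤ x := Iff.rfl

theorem pg_le_of_exists {x y : PGame.{u}} (hl : ∀ i, ∃ i', x.moveLeft i ≤ y.moveLeft i')
    (hr : ∀ j, ∃ j', x.moveRight j' ≤ y.moveRight j) : x ≤ y :=
  le_iff_forall_lf.2 ⟨fun i => lf_iff_exists_le.2 (Or.inl (hl i)),
    fun j => lf_iff_exists_le.2 (Or.inr (hr j))⟩

theorem pg_equiv_of_exists {x y : PGame.{u}} (hl₁ : ∀ i, ∃ j, x.moveLeft i ≈ y.moveLeft j)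
    (hr₁ : ∀ i, ∃ j, x.moveRight i ≈ y.moveRight j) (hl₂ : ∀ j, ∃ i, x.moveLeft i ≈ y.moveLeft j)
    (hr₂ : ∀ j, ∃ i, x.moveRight i ≈ y.moveRight j) : x ≈ y :=
  equiv_def.2 ⟨pg_le_of_exists (fun i => (hl₁ i).imp fun _ h => (equiv_def.1 h).1)
      (fun j => (hr₂ j).imp fun _ h => (equiv_def.1 h).1),
    pg_le_of_exists (fun j => (hl₂ j).imp fun _ h => (equiv_def.1 h).2)
      (fun i => (hr₁ i).imp fun _ h => (equiv_def.1 h).2)⟩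

theorem neg_def {xl xr : Type u} {xL : xl → PGame.{u}} {xR : xr → PGame.{u}} :
    -mk xl xr xL xR = mk xr xl (fun j => -xR j) (fun i => -xL i) := rfl

theorem pg_neg_zero : -(0 : PGame.{u}) = 0 := by
  show mk PEmpty PEmpty _ _ = mk PEmpty PEmpty _ _
  congr 1 <;> funext i <;> exact PEmpty.elim i

instance : NegZeroClass PGame.{u} :=
  { zero := 0, neg := Neg.neg, neg_zero := pg_neg_zero }

theorem leftMoves_add : ∀ x y : PGame.{u}, (x + y).LeftMoves = (x.LeftMoves ⊕ y.LeftMoves)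
  | ⟨_, _, _, _⟩, ⟨_, _, _, _⟩ => rfl

theorem rightMoves_add : ∀ x y : PGame.{u}, (x + y).RightMoves = (x.RightMoves ⊕ y.RightMoves)
  | ⟨_, _, _, _⟩, ⟨_, _, _, _⟩ => rfl

def toLeftMovesAdd {x y : PGame.{u}} : x.LeftMoves ⊕ y.LeftMoves ≃ (x + y).LeftMoves :=
  Equiv.cast (leftMoves_add x y).symm

def toRightMovesAdd {x y : PGame.{u}} : x.RightMoves ⊕ y.RightMoves ≃ (x + y).RightMoves :=
  Equiv.cast (rightMoves_add x y).symm

@[simp] theorem add_moveLeft_inl {x : PGame.{u}} (y : PGame.{u}) (i) :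
    (x + y).moveLeft (toLeftMovesAdd (Sum.inl i)) = x.moveLeft i + y := by
  cases x; cases y; rfl

@[simp] theorem add_moveRight_inl {x : PGame.{u}} (y : PGame.{u}) (i) :
    (x + y).moveRight (toRightMovesAdd (Sum.inl i)) = x.moveRight i + y := by
  cases x; cases y; rfl

@[simp] theorem add_moveLeft_inr (x : PGame.{u}) {y : PGame.{u}} (i) :
    (x + y).moveLeft (toLeftMovesAdd (Sum.inr i)) = x + y.moveLeft i := by
  cases x; cases y; rfl

@[simp] theorem add_moveRight_inr (x : PGame.{u}) {y : PGame.{u}} (i) :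
    (x + y).moveRight (toRightMovesAdd (Sum.inr i)) = x + y.moveRight i := by
  cases x; cases y; rfl

@[elab_as_elim]
theorem pg_leftMoves_add_cases {x y : PGame.{u}} (k) {P : (x + y).LeftMoves → Prop}
    (hl : ∀ i, P (toLeftMovesAdd (Sum.inl i))) (hr : ∀ i, P (toLeftMovesAdd (Sum.inr i))) :
    P k := by
  rw [← toLeftMovesAdd.apply_symm_apply k]
  rcases toLeftMovesAdd.symm k with i | i
  · exact hl i
  · exact hr i

@[elab_as_elim]
theorem pg_rightMoves_add_cases {x y : PGame.{u}} (k) {P : (x + y).RightMoves → Prop}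
    (hl : ∀ i, P (toRightMovesAdd (Sum.inl i))) (hr : ∀ i, P (toRightMovesAdd (Sum.inr i))) :
    P k := by
  rw [← toRightMovesAdd.apply_symm_apply k]
  rcases toRightMovesAdd.symm k with i | i
  · exact hl i
  · exact hr i

theorem leftMoves_add_cases {x y : PGame.{u}} (k) {P : (x + y).LeftMoves → Prop}
    (hl : ∀ i, P (toLeftMovesAdd (Sum.inl i))) (hr : ∀ i, P (toLeftMovesAdd (Sum.inr i))) :
    P k := pg_leftMoves_add_cases k hl hr

theorem rightMoves_add_cases {x y : PGame.{u}} (k) {P : (x + y).RightMoves → Prop}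
    (hl : ∀ i, P (toRightMovesAdd (Sum.inl i))) (hr : ∀ i, P (toRightMovesAdd (Sum.inr i))) :
    P k := pg_rightMoves_add_cases k hl hr

theorem pg_add_mono_aux (x y z : PGame.{u}) :
    (x ≤ y → x + z ≤ y + z) ∧ (x ⧏ y → x + z ⧏ y + z) := by
  induction x generalizing y z with
  | mk xl xr xL xR IHxl IHxr =>
  induction y generalizing z with
  | mk yl yr yL yR IHyl IHyr =>
  induction z with
  | mk zl zr zL zR IHzl IHzr =>
  constructor
  · intro h
    have h' := le_iff_forall_lf.1 h
    rw [le_iff_forall_lf]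
    constructor
    · intro k
      refine pg_leftMoves_add_cases k (fun i => ?_) (fun i => ?_)
      · rw [add_moveLeft_inl]; exact (IHxl i _ _).2 (h'.1 i)
      · rw [add_moveLeft_inr]
        exact lf_iff_exists_le.2 (Or.inl ⟨toLeftMovesAdd (Sum.inr i),
          by rw [add_moveLeft_inr]; exact (IHzl i).1 h⟩)
    · intro k
      refine pg_rightMoves_add_cases k (fun j => ?_) (fun j => ?_)
      · rw [add_moveRight_inl]; exact (IHyr j _).2 (h'.2 j)
      · rw [add_moveRight_inr]
        exact lf_iff_exists_le.2 (Or.inr ⟨toRightMovesAdd (Sum.inr j),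
          by rw [add_moveRight_inr]; exact (IHzr j).1 h⟩)
  · intro h
    rcases lf_iff_exists_le.1 h with ⟨i, hi⟩ | ⟨j, hj⟩
    · exact lf_iff_exists_le.2 (Or.inl ⟨toLeftMovesAdd (Sum.inl i),
        by rw [add_moveLeft_inl]; exact (IHyl i _).1 hi⟩)
    · exact lf_iff_exists_le.2 (Or.inr ⟨toRightMovesAdd (Sum.inl j),
        by rw [add_moveRight_inl]; exact (IHxr j _ _).1 hj⟩)

theorem add_comm_equiv (x y : PGame.{u}) : x + y ≈ y + x := by
  induction x generalizing y with
  | mk xl xr xL xR IHxl IHxr =>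
  induction y with
  | mk yl yr yL yR IHyl IHyr =>
  refine pg_equiv_of_exists (fun k => ?_) (fun k => ?_) (fun k => ?_) (fun k => ?_)
  · refine pg_leftMoves_add_cases k (fun i => ⟨toLeftMovesAdd (Sum.inr i), ?_⟩)
      (fun i => ⟨toLeftMovesAdd (Sum.inl i), ?_⟩)
    · rw [add_moveLeft_inl, add_moveLeft_inr]; exact IHxl i _
    · rw [add_moveLeft_inr, add_moveLeft_inl]; exact IHyl i
  · refine pg_rightMoves_add_cases k (fun i => ⟨toRightMovesAdd (Sum.inr i), ?_⟩)
      (fun i => ⟨toRightMovesAdd (Sum.inl i), ?_⟩)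
    · rw [add_moveRight_inl, add_moveRight_inr]; exact IHxr i _
    · rw [add_moveRight_inr, add_moveRight_inl]; exact IHyr i
  · refine pg_leftMoves_add_cases k (fun i => ⟨toLeftMovesAdd (Sum.inr i), ?_⟩)
      (fun i => ⟨toLeftMovesAdd (Sum.inl i), ?_⟩)
    · rw [add_moveLeft_inl, add_moveLeft_inr]; exact IHyl i
    · rw [add_moveLeft_inr, add_moveLeft_inl]; exact IHxl i _
  · refine pg_rightMoves_add_cases k (fun i => ⟨toRightMovesAdd (Sum.inr i), ?_⟩)
      (fun i => ⟨toRightMovesAdd (Sum.inl i), ?_⟩)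
    · rw [add_moveRight_inl, add_moveRight_inr]; exact IHyr i
    · rw [add_moveRight_inr, add_moveRight_inl]; exact IHxr i _

theorem zero_add_equiv (x : PGame.{u}) : 0 + x ≈ x := by
  induction x with
  | mk xl xr xL xR IHl IHr =>
  refine pg_equiv_of_exists (fun k => ?_) (fun k => ?_)
    (fun k => ⟨toLeftMovesAdd (Sum.inr k), ?_⟩) (fun k => ⟨toRightMovesAdd (Sum.inr k), ?_⟩)
  · refine pg_leftMoves_add_cases k (fun i => PEmpty.elim i) (fun i => ⟨i, ?_⟩)
    rw [add_moveLeft_inr]; exact IHl i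
  · refine pg_rightMoves_add_cases k (fun i => PEmpty.elim i) (fun i => ⟨i, ?_⟩)
    rw [add_moveRight_inr]; exact IHr i
  · rw [add_moveLeft_inr]; exact IHl k
  · rw [add_moveRight_inr]; exact IHr k

theorem add_zero_equiv (x : PGame.{u}) : x + 0 ≈ x := by
  induction x with
  | mk xl xr xL xR IHl IHr =>
  refine pg_equiv_of_exists (fun k => ?_) (fun k => ?_)
    (fun k => ⟨toLeftMovesAdd (Sum.inl k), ?_⟩) (fun k => ⟨toRightMovesAdd (Sum.inl k), ?_⟩)
  · refine pg_leftMoves_add_cases k (fun i => ⟨i, ?_⟩) (fun i => PEmpty.elim i)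
    rw [add_moveLeft_inl]; exact IHl i
  · refine pg_rightMoves_add_cases k (fun i => ⟨i, ?_⟩) (fun i => PEmpty.elim i)
    rw [add_moveRight_inl]; exact IHr i
  · rw [add_moveLeft_inl]; exact IHl k
  · rw [add_moveRight_inl]; exact IHr k

theorem add_assoc_equiv (x y z : PGame.{u}) : x + y + z ≈ x + (y + z) := by
  induction x generalizing y z with
  | mk xl xr xL xR IHxl IHxr =>
  induction y generalizing z with
  | mk yl yr yL yR IHyl IHyr =>
  induction z with
  | mk zl zr zL zR IHzl IHzr =>
  refine pg_equiv_of_exists (fun k => ?_) (fun k => ?_) (fun k => ?_) (fun k => ?_)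
  · refine pg_leftMoves_add_cases k (fun a => pg_leftMoves_add_cases a
      (fun i => ⟨toLeftMovesAdd (Sum.inl i), ?_⟩)
      (fun j => ⟨toLeftMovesAdd (Sum.inr (toLeftMovesAdd (Sum.inl j))), ?_⟩))
      (fun k => ⟨toLeftMovesAdd (Sum.inr (toLeftMovesAdd (Sum.inr k))), ?_⟩)
    · simp only [add_moveLeft_inl]; exact IHxl i _ _
    · simp only [add_moveLeft_inl, add_moveLeft_inr]; exact IHyl j _
    · simp only [add_moveLeft_inr]; exact IHzl k
  · refine pg_rightMoves_add_cases k (fun a => pg_rightMoves_add_cases a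
      (fun i => ⟨toRightMovesAdd (Sum.inl i), ?_⟩)
      (fun j => ⟨toRightMovesAdd (Sum.inr (toRightMovesAdd (Sum.inl j))), ?_⟩))
      (fun k => ⟨toRightMovesAdd (Sum.inr (toRightMovesAdd (Sum.inr k))), ?_⟩)
    · simp only [add_moveRight_inl]; exact IHxr i _ _
    · simp only [add_moveRight_inl, add_moveRight_inr]; exact IHyr j _
    · simp only [add_moveRight_inr]; exact IHzr k
  · refine pg_leftMoves_add_cases k (fun i => ⟨toLeftMovesAdd (Sum.inl (toLeftMovesAdd (Sum.inl i))), ?_⟩)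
      (fun a => pg_leftMoves_add_cases a
        (fun j => ⟨toLeftMovesAdd (Sum.inl (toLeftMovesAdd (Sum.inr j))), ?_⟩)
        (fun k => ⟨toLeftMovesAdd (Sum.inr k), ?_⟩))
    · simp only [add_moveLeft_inl]; exact IHxl i _ _
    · simp only [add_moveLeft_inl, add_moveLeft_inr]; exact IHyl j _
    · simp only [add_moveLeft_inr]; exact IHzl k
  · refine pg_rightMoves_add_cases k (fun i => ⟨toRightMovesAdd (Sum.inl (toRightMovesAdd (Sum.inl i))), ?_⟩)
      (fun a => pg_rightMoves_add_cases a
        (fun j => ⟨toRightMovesAdd (Sum.inl (toRightMovesAdd (Sum.inr j))), ?_⟩)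
        (fun k => ⟨toRightMovesAdd (Sum.inr k), ?_⟩))
    · simp only [add_moveRight_inl]; exact IHxr i _ _
    · simp only [add_moveRight_inl, add_moveRight_inr]; exact IHyr j _
    · simp only [add_moveRight_inr]; exact IHzr k

theorem neg_add_cancel_equiv (x : PGame.{u}) : -x + x ≈ 0 := by
  induction x with
  | mk xl xr xL xR IHl IHr =>
  refine equiv_def.2 ⟨?_, ?_⟩
  · rw [le_zero_lf]
    intro k
    refine pg_leftMoves_add_cases k (fun i => ?_) (fun i => ?_)
    · rw [add_moveLeft_inl]
      exact lf_zero_le.2 ⟨toRightMovesAdd (Sum.inr i),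
        (add_moveRight_inr _ _).trans_le (equiv_def.1 (IHr i)).1⟩
    · rw [add_moveLeft_inr]
      exact lf_zero_le.2 ⟨toRightMovesAdd (Sum.inl i),
        (add_moveRight_inl _ _).trans_le (equiv_def.1 (IHl i)).1⟩
  · rw [zero_le_lf]
    intro k
    refine pg_rightMoves_add_cases k (fun j => ?_) (fun j => ?_)
    · rw [add_moveRight_inl]
      exact zero_lf_le.2 ⟨toLeftMovesAdd (Sum.inr j),
        (equiv_def.1 (IHl j)).2.trans_eq
          (add_moveLeft_inr ((-mk xl xr xL xR).moveRight j) (y := mk xl xr xL xR) j).symm⟩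
    · rw [add_moveRight_inr]
      exact zero_lf_le.2 ⟨toLeftMovesAdd (Sum.inl j),
        (equiv_def.1 (IHr j)).2.trans_eq
          (add_moveLeft_inl (x := -mk xl xr xL xR) ((mk xl xr xL xR).moveRight j) j).symm⟩

theorem pg_neg_le_neg_aux (x y : PGame.{u}) : (-y ≤ -x ↔ x ≤ y) ∧ (-x ≤ -y ↔ y ≤ x) := by
  induction x generalizing y with
  | mk xl xr xL xR IHxl IHxr =>
  induction y with
  | mk yl yr yL yR IHyl IHyr =>
  constructor
  · refine le_iff_forall_lf.trans (Iff.trans ?_ le_iff_forall_lf.symm)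
    exact and_comm.trans (and_congr (forall_congr' fun j => not_congr (IHxl j _).2)
      (forall_congr' fun i => not_congr (IHyr i).2))
  · refine le_iff_forall_lf.trans (Iff.trans ?_ le_iff_forall_lf.symm)
    exact and_comm.trans (and_congr (forall_congr' fun j => not_congr (IHyl j).1)
      (forall_congr' fun i => not_congr (IHxr i _).1))

theorem pg_neg_congr {x y : PGame.{u}} (h : x ≈ y) : -x ≈ -y :=
  equiv_def.2 ⟨(pg_neg_le_neg_aux y x).1.2 (equiv_def.1 h).2,
    (pg_neg_le_neg_aux x y).1.2 (equiv_def.1 h).1⟩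

theorem pg_add_le_add_right {x y : PGame.{u}} (z : PGame.{u}) (h : x ≤ y) : x + z ≤ y + z :=
  (pg_add_mono_aux x y z).1 h

theorem pg_add_le_add_left {x y : PGame.{u}} (z : PGame.{u}) (h : x ≤ y) : z + x ≤ z + y :=
  le_trans (le_trans (equiv_def.1 (add_comm_equiv z x)).1 (pg_add_le_add_right z h))
    (equiv_def.1 (add_comm_equiv y z)).1

theorem pg_add_congr {a b c d : PGame.{u}} (h1 : a ≈ b) (h2 : c ≈ d) : a + c ≈ b + d :=
  equiv_def.2 ⟨le_trans (pg_add_le_add_right c (equiv_def.1 h1).1)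
      (pg_add_le_add_left b (equiv_def.1 h2).1),
    le_trans (pg_add_le_add_right d (equiv_def.1 h1).2) (pg_add_le_add_left a (equiv_def.1 h2).2)⟩

end PGame

/-- Games: pre-games up to equivalence. -/
abbrev Game : Type (u + 1) := Quotient PGame.setoid.{u}

namespace Game

instance : LE Game.{u} :=
  ⟨Quotient.lift₂ (fun x y : PGame.{u} => x ≤ y) fun _ _ _ _ h1 h2 =>
    propext ⟨fun h => le_trans (PGame.equiv_def.1 h1).2 (le_trans h (PGame.equiv_def.1 h2).1),
      fun h => le_trans (PGame.equiv_def.1 h1).1 (le_trans h (PGame.equiv_def.1 h2).2)⟩⟩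

instance : Zero Game.{u} := ⟨⟦0⟧⟩

instance : Add Game.{u} :=
  ⟨Quotient.lift₂ (fun x y : PGame.{u} => (⟦x + y⟧ : Game.{u})) fun _ _ _ _ h1 h2 =>
    Quotient.sound (PGame.pg_add_congr h1 h2)⟩

instance : Neg Game.{u} :=
  ⟨Quotient.lift (fun x : PGame.{u} => (⟦-x⟧ : Game.{u})) fun _ _ h =>
    Quotient.sound (PGame.pg_neg_congr h)⟩

instance gamePartialOrder : PartialOrder Game.{u} where
  le := (· ≤ ·)
  lt a b := a ≤ b ∧ ¬ b ≤ a
  lt_iff_le_not_ge _ _ := Iff.rfl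
  le_refl := by rintro ⟨x⟩; exact le_refl x
  le_trans := by rintro ⟨x⟩ ⟨y⟩ ⟨z⟩; exact fun h1 h2 => le_trans (α := PGame.{u}) h1 h2
  le_antisymm := by rintro ⟨x⟩ ⟨y⟩ h1 h2; exact Quotient.sound (PGame.equiv_def.2 ⟨h1, h2⟩)

instance gamePreorder : Preorder Game.{u} := gamePartialOrder.toPreorder

instance : AddCommGroup Game.{u} where
  add := (· + ·)
  zero := 0
  neg := Neg.neg
  sub := fun a b => a + -b
  nsmul := nsmulRec
  zsmul := zsmulRec
  add_assoc := by rintro ⟨x⟩ ⟨y⟩ ⟨z⟩; exact Quotient.sound (PGame.add_assoc_equiv x y z)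
  zero_add := by rintro ⟨x⟩; exact Quotient.sound (PGame.zero_add_equiv x)
  add_zero := by rintro ⟨x⟩; exact Quotient.sound (PGame.add_zero_equiv x)
  add_comm := by rintro ⟨x⟩ ⟨y⟩; exact Quotient.sound (PGame.add_comm_equiv x y)
  neg_add_cancel := by rintro ⟨x⟩; exact Quotient.sound (PGame.neg_add_cancel_equiv x)

instance : IsOrderedAddMonoid Game.{u} where
  add_le_add_left := by rintro ⟨a⟩ ⟨b⟩ h ⟨c⟩; exact PGame.pg_add_le_add_right (x := a) (y := b) c h

end Game

namespace PGame

@[simp] theorem quot_add (x y : PGame.{u}) : (⟦x + y⟧ : Game.{u}) = (⟦x⟧ : Game.{u}) + (⟦y⟧ : Game.{u}) := rfl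

@[simp] theorem quot_zero : (⟦0⟧ : Game.{u}) = 0 := rfl

@[simp] theorem quot_neg (x : PGame.{u}) : (⟦-x⟧ : Game.{u}) = -(⟦x⟧ : Game.{u}) := rfl

@[simp] theorem quot_sub (x y : PGame.{u}) : (⟦x - y⟧ : Game.{u}) = (⟦x⟧ : Game.{u}) - (⟦y⟧ : Game.{u}) := rfl

theorem le_iff_game_le {x y : PGame.{u}} : x ≤ y ↔ (⟦x⟧ : Game.{u}) ≤ (⟦y⟧ : Game.{u}) := Iff.rfl

theorem lt_iff_game_lt {x y : PGame.{u}} : x < y ↔ (⟦x⟧ : Game.{u}) < (⟦y⟧ : Game.{u}) := Iff.rfl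

theorem game_eq {x y : PGame.{u}} (h : x ≈ y) : (⟦x⟧ : Game.{u}) = ⟦y⟧ := Quotient.sound h

theorem nim_def (o : Ordinal.{u}) :
    nim o = mk o.ToType o.ToType (fun x => nim (Ordinal.ToType.mk.symm x).val)
      (fun x => nim (Ordinal.ToType.mk.symm x).val) := by
  rw [nim]

theorem leftMoves_nim (o : Ordinal.{u}) : (nim o).LeftMoves = o.ToType := by
  rw [nim_def]; rfl

theorem rightMoves_nim (o : Ordinal.{u}) : (nim o).RightMoves = o.ToType := by
  rw [nim_def]; rfl

noncomputable def toLeftMovesNim {o : Ordinal.{u}} : Set.Iio o ≃ (nim o).LeftMoves :=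
  Ordinal.ToType.mk.toEquiv.trans (Equiv.cast (leftMoves_nim o).symm)

noncomputable def toRightMovesNim {o : Ordinal.{u}} : Set.Iio o ≃ (nim o).RightMoves :=
  Ordinal.ToType.mk.toEquiv.trans (Equiv.cast (rightMoves_nim o).symm)

theorem pg_moveLeft_cast {g : PGame.{u}} {l r : Type u} {L : l → PGame.{u}} {R : r → PGame.{u}}
    (hg : g = mk l r L R) (h : g.LeftMoves = l) (x : l) : g.moveLeft (cast h.symm x) = L x := by
  subst hg; rfl

theorem pg_moveRight_cast {g : PGame.{u}} {l r : Type u} {L : l → PGame.{u}} {R : r → PGame.{u}}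
    (hg : g = mk l r L R) (h : g.RightMoves = r) (x : r) : g.moveRight (cast h.symm x) = R x := by
  subst hg; rfl

theorem moveLeft_nim {o : Ordinal.{u}} (i : Set.Iio o) :
    (nim o).moveLeft (toLeftMovesNim i) = nim i := by
  show (nim o).moveLeft (cast (leftMoves_nim o).symm (Ordinal.ToType.mk i)) = nim i
  rw [pg_moveLeft_cast (nim_def o) (leftMoves_nim o)]
  simp

theorem moveRight_nim {o : Ordinal.{u}} (i : Set.Iio o) :
    (nim o).moveRight (toRightMovesNim i) = nim i := by
  show (nim o).moveRight (cast (rightMoves_nim o).symm (Ordinal.ToType.mk i)) = nim i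
  rw [pg_moveRight_cast (nim_def o) (rightMoves_nim o)]
  simp

@[elab_as_elim]
theorem leftMovesNimRecOn {o : Ordinal.{u}} {P : (nim o).LeftMoves → Prop}
    (i : (nim o).LeftMoves) (H : ∀ a (H : a < o), P (toLeftMovesNim ⟨a, H⟩)) : P i := by
  rw [← toLeftMovesNim.apply_symm_apply i]
  exact H _ (toLeftMovesNim.symm i).2

@[elab_as_elim]
theorem rightMovesNimRecOn {o : Ordinal.{u}} {P : (nim o).RightMoves → Prop}
    (i : (nim o).RightMoves) (H : ∀ a (H : a < o), P (toRightMovesNim ⟨a, H⟩)) : P i := by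
  rw [← toRightMovesNim.apply_symm_apply i]
  exact H _ (toRightMovesNim.symm i).2

theorem neg_nim (o : Ordinal.{u}) : -nim o = nim o := by
  induction o using Ordinal.induction with
  | h o IH =>
  rw [nim_def, neg_def]
  congr 1 <;> funext i <;> exact IH _ (Ordinal.ToType.mk.symm i).2

theorem nim_zero_equiv : nim (0 : Ordinal.{u}) ≈ 0 :=
  pg_equiv_of_exists
    (fun i => leftMovesNimRecOn i fun a h => absurd h (by simp))
    (fun j => rightMovesNimRecOn j fun a h => absurd h (by simp))
    (fun j => PEmpty.elim j) (fun j => PEmpty.elim j)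

theorem nim_one_equiv : nim (1 : Ordinal.{u}) ≈ star := by
  refine pg_equiv_of_exists (fun i => ⟨PUnit.unit, ?_⟩) (fun i => ⟨PUnit.unit, ?_⟩)
    (fun _ => ⟨toLeftMovesNim ⟨0, Set.mem_Iio.2 zero_lt_one⟩, ?_⟩)
    (fun _ => ⟨toRightMovesNim ⟨0, Set.mem_Iio.2 zero_lt_one⟩, ?_⟩)
  · refine leftMovesNimRecOn i fun a h => ?_
    rw [moveLeft_nim]; obtain rfl := Ordinal.lt_one_iff_zero.1 h; exact nim_zero_equiv
  · refine rightMovesNimRecOn i fun a h => ?_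
    rw [moveRight_nim]; obtain rfl := Ordinal.lt_one_iff_zero.1 h; exact nim_zero_equiv
  · rw [moveLeft_nim]; exact nim_zero_equiv
  · rw [moveRight_nim]; exact nim_zero_equiv

theorem neg_star : -star.{u} = star := by
  unfold star; rw [neg_def]; simp only [neg_zero]

theorem nim_add_self (o : Ordinal.{u}) : nim o + nim o ≈ 0 := by
  have h := neg_add_cancel_equiv (nim o)
  rwa [neg_nim] at h

theorem star_add_self : star.{u} + star ≈ 0 := by
  have h := neg_add_cancel_equiv star.{u}
  rwa [neg_star] at h

theorem zero_lf_star : (0 : PGame.{u}) ⧏ star := zero_lf_le.2 ⟨PUnit.unit, le_rfl⟩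

end PGame
end SetTheory



namespace MFProof
open SetTheory PGame

/-- The game `↓` (down). -/
def dn : PGame.{u} := ⟨PUnit, PUnit, fun _ => star, fun _ => 0⟩

theorem neg_up : -up.{u} = dn := by
  unfold up dn
  rw [PGame.neg_def]
  congr
  · funext _; exact neg_star
  · funext _; exact neg_zero

theorem up_pos : (0 : PGame.{u}) < up := by
  rw [lt_iff_le_and_lf]
  constructor
  · refine zero_le_lf.2 fun j => ?_
    show (0 : PGame) ⧏ star
    exact zero_lf_star
  · exact zero_lf_le.2 ⟨PUnit.unit, le_rfl⟩

theorem g_up_pos : (0 : Game.{u}) < ⟦up.{u}⟧ := lt_iff_game_lt.1 up_pos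

theorem g_dn : (⟦dn.{u}⟧ : Game) = -⟦up.{u}⟧ := by rw [← neg_up]; rfl

theorem g_dn_lt : (⟦dn.{u}⟧ : Game) < 0 := by
  rw [g_dn, neg_lt_zero]; exact g_up_pos

theorem g_dd_lt : (⟦dn.{u}⟧ : Game) + ⟦dn.{u}⟧ < 0 := by
  simpa using add_lt_add g_dn_lt g_dn_lt

theorem g_nim_neg (o : Ordinal.{u}) : -(⟦nim o⟧ : Game) = ⟦nim o⟧ := by
  rw [← quot_neg, neg_nim]

theorem g_nim0 : (⟦nim ((0 : ℕ) : Ordinal.{u})⟧ : Game) = 0 := by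
  rw [Nat.cast_zero]; exact game_eq nim_zero_equiv

theorem g_nim1 : (⟦nim ((1 : ℕ) : Ordinal.{u})⟧ : Game) = ⟦star⟧ := by
  rw [Nat.cast_one]; exact game_eq nim_one_equiv

theorem g_nim_self (o : Ordinal.{u}) : (⟦nim o⟧ : Game) + ⟦nim o⟧ = 0 :=
  game_eq (nim_add_self o)

theorem g_star2 : (⟦star.{u}⟧ : Game) + ⟦star.{u}⟧ = 0 :=
  game_eq star_add_self

theorem game_eq' {a b : PGame.{u}} (h : a ≈ b) : (⟦a⟧ : Game) = ⟦b⟧ := game_eq h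

theorem le0_of_game {X : PGame.{u}} (h : (⟦X⟧ : Game) ≤ 0) : X ≤ 0 := le_iff_game_le.2 h

theorem lf0_of_game {X : PGame.{u}} (h : (⟦X⟧ : Game) < 0) : X ⧏ 0 := lf_of_lt (lt_iff_game_lt.2 h)

theorem gf_nim_ne {a b : ℕ} (h : a ≠ b) :
    (0 : PGame) ⧏ nim (a : Ordinal.{u}) + nim (b : Ordinal.{u}) := by
  rcases lt_or_gt_of_ne h with hab | hab
  · refine zero_lf_le.2 ⟨toLeftMovesAdd (Sum.inr (toLeftMovesNim
      ⟨(a : Ordinal), Set.mem_Iio.2 (by exact_mod_cast hab)⟩)), ?_⟩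
    rw [add_moveLeft_inr, moveLeft_nim]
    exact (equiv_def.1 (nim_add_self _)).2
  · refine zero_lf_le.2 ⟨toLeftMovesAdd (Sum.inl (toLeftMovesNim
      ⟨(b : Ordinal), Set.mem_Iio.2 (by exact_mod_cast hab)⟩)), ?_⟩
    rw [add_moveLeft_inl, moveLeft_nim]
    exact (equiv_def.1 (nim_add_self _)).2

/-- For `j ≥ 1`, Right wins `*j + ↓` moving first: move `*j → *0`. -/
theorem nim_dn_lf {j : ℕ} (hj : 0 < j) : nim (j : Ordinal.{u}) + dn ⧏ 0 := by
  refine lf_zero_le.2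
    ⟨toRightMovesAdd (Sum.inl (toRightMovesNim ⟨((0 : ℕ) : Ordinal), Set.mem_Iio.2 (by exact_mod_cast hj)⟩)), ?_⟩
  rw [add_moveRight_inl, moveRight_nim]
  refine le0_of_game ?_
  show (⟦nim ((0 : ℕ) : Ordinal)⟧ : Game) + ⟦dn⟧ ≤ 0
  rw [g_nim0, zero_add]
  exact g_dn_lt.le

/-- `*k < ↑` for `k ≥ 2`, in the form `*k + ↓ < 0`. -/
theorem nim_dn_neg {k : ℕ} (hk : 2 ≤ k) : nim (k : Ordinal.{u}) + dn < 0 := by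
  rw [lt_iff_le_and_lf]
  refine ⟨le_zero_lf.2 fun i => ?_, nim_dn_lf (by omega)⟩
  apply leftMoves_add_cases i
  · intro i; rw [add_moveLeft_inl]
    refine leftMovesNimRecOn i fun a ha => ?_
    rw [moveLeft_nim]
    obtain ⟨j, rfl⟩ := Ordinal.lt_omega0.1 (ha.trans (Ordinal.nat_lt_omega0 k))
    rcases Nat.eq_zero_or_pos j with rfl | hj
    · refine lf0_of_game ?_
      show (⟦nim ((0 : ℕ) : Ordinal)⟧ : Game) + ⟦dn⟧ < 0
      rw [g_nim0, zero_add]; exact g_dn_lt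
    · exact nim_dn_lf hj
  · intro i; rw [add_moveLeft_inr]
    show nim ((k : ℕ) : Ordinal) + star ⧏ 0
    refine lf_zero_le.2
      ⟨toRightMovesAdd (Sum.inl (toRightMovesNim
        ⟨((1 : ℕ) : Ordinal), Set.mem_Iio.2 (by exact_mod_cast (by omega : 1 < k))⟩)), ?_⟩
    rw [add_moveRight_inl, moveRight_nim]
    refine le0_of_game ?_
    show (⟦nim ((1 : ℕ) : Ordinal)⟧ : Game) + ⟦star⟧ ≤ 0
    rw [g_nim1, g_star2]

theorem g_nim_dn {k : ℕ} (hk : 2 ≤ k) : (⟦nim ((k : ℕ) : Ordinal.{u})⟧ : Game) + ⟦dn⟧ < 0 :=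
  lt_iff_game_lt.1 (nim_dn_neg hk)

/-- `* + ↓ + ↓ < 0`, i.e. `↑↑* > 0`. -/
theorem star_dd_neg : (star.{u} + dn) + dn < 0 := by
  rw [lt_iff_le_and_lf]
  constructor
  · refine le_zero_lf.2 fun i => ?_
    apply leftMoves_add_cases i
    · intro i; rw [add_moveLeft_inl]
      apply leftMoves_add_cases i
      · intro i; rw [add_moveLeft_inl]
        show ((0 : PGame) + dn) + dn ⧏ 0
        refine lf0_of_game ?_
        show ((0 : Game) + ⟦dn⟧) + ⟦dn⟧ < 0
        rw [zero_add]; exact g_dd_lt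
      · intro i; rw [add_moveLeft_inr]
        show (star + star) + dn ⧏ 0
        refine lf0_of_game ?_
        show ((⟦star⟧ : Game) + ⟦star⟧) + ⟦dn⟧ < 0
        rw [g_star2, zero_add]; exact g_dn_lt
    · intro i; rw [add_moveLeft_inr]
      show (star + dn) + star ⧏ 0
      refine lf0_of_game ?_
      show ((⟦star⟧ : Game) + ⟦dn⟧) + ⟦star⟧ < 0
      have e : ((⟦star⟧ : Game) + ⟦dn⟧) + ⟦star⟧ = ⟦dn⟧ + (⟦star⟧ + ⟦star⟧) := by abel
      rw [e, g_star2, add_zero]; exact g_dn_lt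
  · refine lf_zero_le.2
      ⟨toRightMovesAdd (Sum.inl (toRightMovesAdd (Sum.inl PUnit.unit))), ?_⟩
    erw [add_moveRight_inl, add_moveRight_inl]
    show ((0 : PGame) + dn) + dn ≤ 0
    refine le0_of_game ?_
    show ((0 : Game) + ⟦dn⟧) + ⟦dn⟧ ≤ 0
    rw [zero_add]; exact g_dd_lt.le

/-- `*k + ↓ + ↓ < 0` for every `k`, i.e. `⇑ > *k`. -/
theorem nim_dd_neg (k : ℕ) : (nim ((k : ℕ) : Ordinal.{u}) + dn) + dn < 0 := by
  rcases Nat.lt_or_ge k 2 with hk | hk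
  · interval_cases k
    · refine lt_iff_game_lt.2 ?_
      show ((⟦nim ((0:ℕ) : Ordinal)⟧ : Game) + ⟦dn⟧) + ⟦dn⟧ < ⟦0⟧
      rw [g_nim0, zero_add]; exact g_dd_lt
    · refine lt_iff_game_lt.2 ?_
      show ((⟦nim ((1:ℕ) : Ordinal)⟧ : Game) + ⟦dn⟧) + ⟦dn⟧ < ⟦0⟧
      rw [g_nim1]
      exact lt_iff_game_lt.1 star_dd_neg
  · refine lt_iff_game_lt.2 ?_
    show ((⟦nim ((k:ℕ) : Ordinal)⟧ : Game) + ⟦dn⟧) + ⟦dn⟧ < ⟦0⟧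
    calc ((⟦nim ((k:ℕ) : Ordinal)⟧ : Game) + ⟦dn⟧) + ⟦dn⟧ < 0 + 0 :=
          add_lt_add (g_nim_dn hk) g_dn_lt
      _ = ⟦0⟧ := by simp
      
theorem g_nim_dd (k : ℕ) : ((⟦nim ((k : ℕ) : Ordinal.{u})⟧ : Game) + ⟦dn⟧) + ⟦dn⟧ < 0 :=
  lt_iff_game_lt.1 (nim_dd_neg k)

/-- `*k + * + ↓ ≤ 0` for `k ≥ 3`, i.e. `↑ ≥ *k + *`. -/
theorem nim_star_dn_le {k : ℕ} (hk : 3 ≤ k) :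
    (nim ((k : ℕ) : Ordinal.{u}) + star) + dn ≤ 0 := by
  refine le_zero_lf.2 fun i => ?_
  apply leftMoves_add_cases i
  · intro i; rw [add_moveLeft_inl]
    apply leftMoves_add_cases i
    · intro i; rw [add_moveLeft_inl]
      refine leftMovesNimRecOn i fun a ha => ?_
      rw [moveLeft_nim]
      obtain ⟨j, rfl⟩ := Ordinal.lt_omega0.1 (ha.trans (Ordinal.nat_lt_omega0 k))
      by_cases hj : j = 1
      · subst hj
        refine lf0_of_game ?_
        show ((⟦nim ((1:ℕ) : Ordinal)⟧ : Game) + ⟦star⟧) + ⟦dn⟧ < 0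
        rw [g_nim1]
        have e : ((⟦star⟧ : Game) + ⟦star⟧) + ⟦dn⟧ = ⟦dn⟧ + (⟦star⟧ + ⟦star⟧) := by abel
        rw [e, g_star2, add_zero]; exact g_dn_lt
      · -- Right answers `* → 0`
        refine lf_zero_le.2
          ⟨toRightMovesAdd (Sum.inl (toRightMovesAdd (Sum.inr PUnit.unit))), ?_⟩
        erw [add_moveRight_inl, add_moveRight_inr]
        show (nim ((j:ℕ) : Ordinal) + 0) + dn ≤ 0
        refine le0_of_game ?_
        show ((⟦nim ((j:ℕ) : Ordinal)⟧ : Game) + ⟦(0 : PGame)⟧) + ⟦dn⟧ ≤ 0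
        rcases Nat.eq_zero_or_pos j with rfl | hj'
        · rw [g_nim0]; simpa using g_dn_lt.le
        · have hj2 : 2 ≤ j := by omega
          have : (⟦nim ((j:ℕ) : Ordinal)⟧ : Game) + ⟦(0 : PGame)⟧ + ⟦dn⟧ =
              ⟦nim ((j:ℕ) : Ordinal)⟧ + ⟦dn⟧ + ⟦(0 : PGame)⟧ := by abel
          rw [this]
          simpa using (g_nim_dn hj2).le
    · -- Left moves `* → 0`; Right answers `*k → *2`
      intro i
      rw [add_moveLeft_inr]
      show (nim ((k:ℕ) : Ordinal) + 0) + dn ⧏ 0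
      refine lf_zero_le.2
        ⟨toRightMovesAdd (Sum.inl (toRightMovesAdd (Sum.inl (toRightMovesNim
          ⟨((2 : ℕ) : Ordinal), Set.mem_Iio.2 (by exact_mod_cast (by omega : 2 < k))⟩)))), ?_⟩
      rw [add_moveRight_inl, add_moveRight_inl, moveRight_nim]
      show (nim ((2:ℕ) : Ordinal) + 0) + dn ≤ 0
      refine le0_of_game ?_
      show ((⟦nim ((2:ℕ) : Ordinal)⟧ : Game) + ⟦(0 : PGame)⟧) + ⟦dn⟧ ≤ 0
      have : (⟦nim ((2:ℕ) : Ordinal)⟧ : Game) + ⟦(0 : PGame)⟧ + ⟦dn⟧ =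
          ⟦nim ((2:ℕ) : Ordinal)⟧ + ⟦dn⟧ + ⟦(0 : PGame)⟧ := by abel
      rw [this]
      simpa using (g_nim_dn (le_refl 2)).le
  · -- Left moves `↓ → *`; Right answers `*k → *0`
    intro i
    rw [add_moveLeft_inr]
    show (nim ((k:ℕ) : Ordinal) + PGame.star) + PGame.star ⧏ 0
    refine lf_zero_le.2
      ⟨toRightMovesAdd (Sum.inl (toRightMovesAdd (Sum.inl (toRightMovesNim
        ⟨((0 : ℕ) : Ordinal), Set.mem_Iio.2 (by exact_mod_cast (by omega : 0 < k))⟩)))), ?_⟩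
    rw [add_moveRight_inl, add_moveRight_inl, moveRight_nim]
    show (nim ((0:ℕ) : Ordinal) + star) + star ≤ 0
    refine le0_of_game ?_
    show ((⟦nim ((0:ℕ) : Ordinal)⟧ : Game) + ⟦star⟧) + ⟦star⟧ ≤ 0
    rw [g_nim0, zero_add, g_star2]

theorem neg_superstar {n : ℕ} (x : Fin n → ℕ) : -superstar x = superstar x := by
  unfold superstar
  rw [PGame.neg_def]
  simp only [neg_nim]

theorem neg_ordinalSum : ∀ G H : PGame.{u}, -ordinalSum G H = ordinalSum (-G) (-H)
  | PGame.mk gl gr aL aR, PGame.mk bl br bL bR => by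
    rw [ordinalSum, ordinalSum, PGame.neg_def, PGame.neg_def, PGame.neg_def]
    simp only [leftMoves_mk, rightMoves_mk, moveLeft_mk, moveRight_mk]
    congr 1
    · funext i
      cases i with
      | inl i => rfl
      | inr i =>
        show -ordinalSum (PGame.mk gl gr aL aR) (bR i) = ordinalSum (-PGame.mk gl gr aL aR) (-bR i)
        rw [neg_ordinalSum (PGame.mk gl gr aL aR) (bR i), PGame.neg_def]
    · funext i
      cases i with
      | inl i => rfl
      | inr i =>
        show -ordinalSum (PGame.mk gl gr aL aR) (bL i) = ordinalSum (-PGame.mk gl gr aL aR) (-bL i)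
        rw [neg_ordinalSum (PGame.mk gl gr aL aR) (bL i), PGame.neg_def]
termination_by G H => H
decreasing_by all_goals first | exact Subsequent.moveRight (PGame.mk _ _ _ _) _ | exact Subsequent.moveLeft (PGame.mk _ _ _ _) _

theorem lem_A2 {n : ℕ} {x : Fin n → ℕ} {m : ℕ} (hmm : m ∉ Set.range x)
    (hlt : ∀ k, k < m → k ∈ Set.range x) :
    (0 : PGame) ≤ ordinalSum (superstar x) 0 + nim (m : Ordinal) := by
  rw [ordinalSum]
  refine zero_le_lf.2 fun j => ?_
  apply rightMoves_add_cases j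
  · intro i
    rw [add_moveRight_inl]
    rcases i with i | i
    · show (0 : PGame) ⧏ nim ((x i : ℕ) : Ordinal) + nim ((m : ℕ) : Ordinal)
      exact gf_nim_ne fun h => hmm ⟨i, h⟩
    · exact PEmpty.elim i
  · intro i
    rw [add_moveRight_inr]
    refine rightMovesNimRecOn i fun a ha => ?_
    rw [moveRight_nim]
    obtain ⟨k, rfl⟩ := Ordinal.lt_omega0.1 (ha.trans (Ordinal.nat_lt_omega0 m))
    have hk : k < m := by exact_mod_cast ha
    obtain ⟨i', hi'⟩ := hlt k hk
    refine zero_lf_le.2 ⟨toLeftMovesAdd (Sum.inl (Sum.inl i')), ?_⟩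
    erw [add_moveLeft_inl]
    show (0 : PGame) ≤ nim ((x i' : ℕ) : Ordinal) + nim ((k : ℕ) : Ordinal)
    rw [hi']
    exact (equiv_def.1 (nim_add_self _)).2

theorem lem_A1 {n : ℕ} {x : Fin n → ℕ} {m : ℕ} (hmm : m ∉ Set.range x)
    (hlt : ∀ k, k < m → k ∈ Set.range x) :
    (0 : PGame) ≤ ordinalSum (superstar x) 1 + nim (m : Ordinal) := by
  rw [ordinalSum]
  refine zero_le_lf.2 fun j => ?_
  apply rightMoves_add_cases j
  · intro i
    rw [add_moveRight_inl]
    rcases i with i | i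
    · show (0 : PGame) ⧏ nim ((x i : ℕ) : Ordinal) + nim ((m : ℕ) : Ordinal)
      exact gf_nim_ne fun h => hmm ⟨i, h⟩
    · exact PEmpty.elim i
  · intro i
    rw [add_moveRight_inr]
    refine rightMovesNimRecOn i fun a ha => ?_
    rw [moveRight_nim]
    obtain ⟨k, rfl⟩ := Ordinal.lt_omega0.1 (ha.trans (Ordinal.nat_lt_omega0 m))
    have hk : k < m := by exact_mod_cast ha
    obtain ⟨i', hi'⟩ := hlt k hk
    refine zero_lf_le.2 ⟨toLeftMovesAdd (Sum.inl (Sum.inl i')), ?_⟩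
    erw [add_moveLeft_inl]
    show (0 : PGame) ≤ nim ((x i' : ℕ) : Ordinal) + nim ((k : ℕ) : Ordinal)
    rw [hi']
    exact (equiv_def.1 (nim_add_self _)).2

theorem lem_A {n : ℕ} {x : Fin n → ℕ} {m N : ℕ} (hmm : m ∉ Set.range x)
    (hlt : ∀ k, k < m → k ∈ Set.range x) (hmN : m < N) (hNr : ∀ i, x i < N) :
    (0 : PGame) < ordinalSum (superstar x) 1 + nim (N : Ordinal) := by
  have hA1 : (0 : PGame) ≤ ordinalSum (superstar x) 1 + nim (m : Ordinal) := lem_A1 hmm hlt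
  rw [lt_iff_le_and_lf]
  constructor
  · refine zero_le_lf.2 fun j => ?_
    apply rightMoves_add_cases j
    · intro i
      rw [add_moveRight_inl]
      revert i
      rw [ordinalSum]
      intro i
      rcases i with i | i
      · show (0 : PGame) ⧏ nim ((x i : ℕ) : Ordinal) + nim ((N : ℕ) : Ordinal)
        exact gf_nim_ne (hNr i).ne
      · exact PEmpty.elim i
    · intro i
      rw [add_moveRight_inr]
      refine rightMovesNimRecOn i fun a ha => ?_
      rw [moveRight_nim]
      obtain ⟨k, rfl⟩ := Ordinal.lt_omega0.1 (ha.trans (Ordinal.nat_lt_omega0 N))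
      show (0 : PGame) ⧏ ordinalSum (superstar x) 1 + nim ((k : ℕ) : Ordinal)
      by_cases hkr : k ∈ Set.range x
      · obtain ⟨i', hi'⟩ := hkr
        rw [ordinalSum]
        refine zero_lf_le.2 ⟨toLeftMovesAdd (Sum.inl (Sum.inl i')), ?_⟩
        erw [add_moveLeft_inl]
        show (0 : PGame) ≤ nim ((x i' : ℕ) : Ordinal) + nim ((k : ℕ) : Ordinal)
        rw [hi']
        exact (equiv_def.1 (nim_add_self _)).2
      · by_cases hkm : k = m
        · subst hkm
          rw [ordinalSum]
          refine zero_lf_le.2 ⟨toLeftMovesAdd (Sum.inl (Sum.inr PUnit.unit)), ?_⟩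
          erw [add_moveLeft_inl]
          exact lem_A2 hmm hlt
        · have hmk : m < k := lt_of_le_of_ne (not_lt.1 fun h => hkr (hlt k h)) (Ne.symm hkm)
          refine zero_lf_le.2 ⟨toLeftMovesAdd (Sum.inr (toLeftMovesNim
            ⟨((m : ℕ) : Ordinal), Set.mem_Iio.2 (by exact_mod_cast hmk)⟩)), ?_⟩
          rw [add_moveLeft_inr, moveLeft_nim]
          exact hA1
  · refine zero_lf_le.2 ⟨toLeftMovesAdd (Sum.inr (toLeftMovesNim
      ⟨((m : ℕ) : Ordinal), Set.mem_Iio.2 (by exact_mod_cast hmN)⟩)), ?_⟩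
    rw [add_moveLeft_inr, moveLeft_nim]
    exact hA1

theorem lem_B {n : ℕ} {x : Fin n → ℕ} {N : ℕ} {i0 : Fin n} (hi0 : x i0 = 0)
    (hN3 : 3 ≤ N) (hNr : ∀ i, x i < N) :
    ((ordinalSum (superstar x) 1 + nim (N : Ordinal)) + dn) + dn < 0 := by
  rw [lt_iff_le_and_lf]
  constructor
  · refine le_zero_lf.2 fun i => ?_
    apply leftMoves_add_cases i
    · intro i
      rw [add_moveLeft_inl]
      apply leftMoves_add_cases i
      · intro i
        rw [add_moveLeft_inl]
        apply leftMoves_add_cases i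
        · -- move in G
          intro i
          rw [add_moveLeft_inl]
          revert i
          rw [ordinalSum]
          intro i
          rcases i with i | u
          · -- G → *(x i); answer *N → *(x i)
            refine lf_zero_le.2 ⟨toRightMovesAdd (Sum.inl (toRightMovesAdd (Sum.inl
              (toRightMovesAdd (Sum.inr (toRightMovesNim
                ⟨((x i : ℕ) : Ordinal), Set.mem_Iio.2 (by exact_mod_cast hNr i)⟩)))))), ?_⟩
            rw [add_moveRight_inl, add_moveRight_inl, add_moveRight_inr, moveRight_nim]
            show ((nim ((x i : ℕ) : Ordinal) + nim ((x i : ℕ) : Ordinal)) + dn) + dn ≤ 0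
            refine le0_of_game ?_
            show (((⟦nim ((x i : ℕ) : Ordinal)⟧ : Game) + ⟦nim ((x i : ℕ) : Ordinal)⟧) + ⟦dn⟧) + ⟦dn⟧ ≤ 0
            rw [g_nim_self, zero_add]
            exact g_dd_lt.le
          · -- G → S:0; answer S:0 → *0
            simp only [moveLeft_mk, Sum.elim_inr]
            rw [ordinalSum]
            refine lf_zero_le.2 ⟨toRightMovesAdd (Sum.inl (toRightMovesAdd (Sum.inl
              (toRightMovesAdd (Sum.inl (Sum.inl i0)))))), ?_⟩
            erw [add_moveRight_inl, add_moveRight_inl, add_moveRight_inl]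
            show ((nim ((x i0 : ℕ) : Ordinal) + nim ((N : ℕ) : Ordinal)) + dn) + dn ≤ 0
            rw [hi0]
            refine le0_of_game ?_
            show (((⟦nim ((0 : ℕ) : Ordinal)⟧ : Game) + ⟦nim ((N : ℕ) : Ordinal)⟧) + ⟦dn⟧) + ⟦dn⟧ ≤ 0
            rw [g_nim0, zero_add]
            exact (g_nim_dd N).le
        · -- *N → *k; answer G → *0
          intro i
          rw [add_moveLeft_inr]
          refine leftMovesNimRecOn i fun a ha => ?_
          rw [moveLeft_nim]
          obtain ⟨k, rfl⟩ := Ordinal.lt_omega0.1 (ha.trans (Ordinal.nat_lt_omega0 N))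
          show ((ordinalSum (superstar x) 1 + nim ((k : ℕ) : Ordinal)) + dn) + dn ⧏ 0
          rw [ordinalSum]
          refine lf_zero_le.2 ⟨toRightMovesAdd (Sum.inl (toRightMovesAdd (Sum.inl
            (toRightMovesAdd (Sum.inl (Sum.inl i0)))))), ?_⟩
          erw [add_moveRight_inl, add_moveRight_inl, add_moveRight_inl]
          show ((nim ((x i0 : ℕ) : Ordinal) + nim ((k : ℕ) : Ordinal)) + dn) + dn ≤ 0
          rw [hi0]
          refine le0_of_game ?_
          show (((⟦nim ((0 : ℕ) : Ordinal)⟧ : Game) + ⟦nim ((k : ℕ) : Ordinal)⟧) + ⟦dn⟧) + ⟦dn⟧ ≤ 0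
          rw [g_nim0, zero_add]
          exact (g_nim_dd k).le
      · -- first ↓ → *; answer G → *0
        intro i
        rw [add_moveLeft_inr]
        show ((ordinalSum (superstar x) 1 + nim ((N : ℕ) : Ordinal)) + PGame.star) + dn ⧏ 0
        rw [ordinalSum]
        refine lf_zero_le.2 ⟨toRightMovesAdd (Sum.inl (toRightMovesAdd (Sum.inl
          (toRightMovesAdd (Sum.inl (Sum.inl i0)))))), ?_⟩
        erw [add_moveRight_inl, add_moveRight_inl, add_moveRight_inl]
        show ((nim ((x i0 : ℕ) : Ordinal) + nim ((N : ℕ) : Ordinal)) + PGame.star) + dn ≤ 0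
        rw [hi0]
        refine le0_of_game ?_
        show (((⟦nim ((0 : ℕ) : Ordinal)⟧ : Game) + ⟦nim ((N : ℕ) : Ordinal)⟧) + ⟦PGame.star⟧) + ⟦dn⟧ ≤ 0
        rw [g_nim0, zero_add]
        exact le_iff_game_le.1 (nim_star_dn_le hN3)
    · -- second ↓ → *; answer G → *0
      intro i
      rw [add_moveLeft_inr]
      show ((ordinalSum (superstar x) 1 + nim ((N : ℕ) : Ordinal)) + dn) + PGame.star ⧏ 0
      rw [ordinalSum]
      refine lf_zero_le.2 ⟨toRightMovesAdd (Sum.inl (toRightMovesAdd (Sum.inl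
        (toRightMovesAdd (Sum.inl (Sum.inl i0)))))), ?_⟩
      erw [add_moveRight_inl, add_moveRight_inl, add_moveRight_inl]
      show ((nim ((x i0 : ℕ) : Ordinal) + nim ((N : ℕ) : Ordinal)) + dn) + PGame.star ≤ 0
      rw [hi0]
      refine le0_of_game ?_
      show (((⟦nim ((0 : ℕ) : Ordinal)⟧ : Game) + ⟦nim ((N : ℕ) : Ordinal)⟧) + ⟦dn⟧) + ⟦PGame.star⟧ ≤ 0
      rw [g_nim0, zero_add]
      have e : ((⟦nim ((N : ℕ) : Ordinal)⟧ : Game) + ⟦dn⟧) + ⟦PGame.star⟧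
          = (⟦nim ((N : ℕ) : Ordinal)⟧ + ⟦PGame.star⟧) + ⟦dn⟧ := by abel
      rw [e]
      exact le_iff_game_le.1 (nim_star_dn_le hN3)
  · -- Right moving first: G → *0
    rw [ordinalSum]
    refine lf_zero_le.2 ⟨toRightMovesAdd (Sum.inl (toRightMovesAdd (Sum.inl
      (toRightMovesAdd (Sum.inl (Sum.inl i0)))))), ?_⟩
    erw [add_moveRight_inl, add_moveRight_inl, add_moveRight_inl]
    show ((nim ((x i0 : ℕ) : Ordinal) + nim ((N : ℕ) : Ordinal)) + dn) + dn ≤ 0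
    rw [hi0]
    refine le0_of_game ?_
    show (((⟦nim ((0 : ℕ) : Ordinal)⟧ : Game) + ⟦nim ((N : ℕ) : Ordinal)⟧) + ⟦dn⟧) + ⟦dn⟧ ≤ 0
    rw [g_nim0, zero_add]
    exact (g_nim_dd N).le

end MFProof

/-- a mutant flower `{*x₁,…,*xₙ}:1` of positive height
(`mex{xᵢ} > 0`) has atomic weight `1`; symmetrically, `{*x₁,…,*xₙ}:(-1)` has
atomic weight `-1`. -/
theorem mutantFlower_atomicWeight (n : ℕ) (x : Fin n → ℕ)
    (hx : 0 < setMex (Set.range x)) :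
    HasIntAtomicWeight (ordinalSum (superstar x) 1) 1 ∧
      HasIntAtomicWeight (ordinalSum (superstar x) (-1)) (-1) := by
  classical
  have hne : {k : ℕ | k ∉ Set.range x}.Nonempty :=
    ((Set.finite_range x).infinite_compl).nonempty
  have hmm : setMex (Set.range x) ∉ Set.range x := Nat.sInf_mem hne
  have hlt : ∀ k, k < setMex (Set.range x) → k ∈ Set.range x := by
    intro k hk
    by_contra hkn
    exact absurd (Nat.sInf_le hkn) (not_le.2 hk)
  obtain ⟨i0, hi0⟩ := hlt 0 hx
  set m := setMex (Set.range x) with hmdef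
  have hxle : ∀ i, x i ≤ Finset.univ.sum x := fun i =>
    Finset.single_le_sum (f := x) (fun _ _ => Nat.zero_le _) (Finset.mem_univ i)
  have hU1 : (⟦upMul 1⟧ : Game) = ⟦up⟧ := by
    show (⟦(0 : PGame) + up⟧ : Game) = ⟦up⟧
    exact MFProof.game_eq' (zero_add_equiv up)
  have hU2 : (⟦upMul (-1)⟧ : Game) = -⟦up⟧ := by
    show (⟦-((0 : PGame) + up)⟧ : Game) = -⟦up⟧
    rw [quot_neg]
    exact congrArg Neg.neg (MFProof.game_eq' (zero_add_equiv up))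
  have hneg : ordinalSum (superstar x) (-1) = -(ordinalSum (superstar x) 1) := by
    conv_lhs => rw [← MFProof.neg_superstar x]
    rw [← MFProof.neg_ordinalSum]
  have main : ∀ N : ℕ, (Finset.univ.sum x) + m + 3 ≤ N →
      (⟦nim ((N : ℕ) : Ordinal)⟧ : Game) < ⟦ordinalSum (superstar x) 1⟧ ∧
      (⟦ordinalSum (superstar x) 1⟧ : Game) - ⟦up⟧ < ⟦nim ((N : ℕ) : Ordinal)⟧ + ⟦up⟧ := by
    intro N hN
    have h1 : ∀ i, x i < N := fun i => by have := hxle i; omega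
    have h2 : m < N := by omega
    have h3 : 3 ≤ N := by omega
    have hA : (0 : Game) < ⟦ordinalSum (superstar x) 1⟧ + ⟦nim ((N : ℕ) : Ordinal)⟧ := by
      simpa using lt_iff_game_lt.1 (MFProof.lem_A hmm hlt h2 h1)
    have hB : (((⟦ordinalSum (superstar x) 1⟧ : Game) + ⟦nim ((N : ℕ) : Ordinal)⟧)
        + ⟦MFProof.dn⟧) + ⟦MFProof.dn⟧ < 0 := by
      simpa using lt_iff_game_lt.1 (MFProof.lem_B hi0 h3 h1)
    constructor
    · have h'' : (0 : Game) < ⟦ordinalSum (superstar x) 1⟧ - -⟦nim ((N : ℕ) : Ordinal)⟧ := by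
        rwa [sub_neg_eq_add]
      have h' := sub_pos.1 h''
      rwa [MFProof.g_nim_neg] at h'
    · rw [← sub_neg]
      have e : (⟦ordinalSum (superstar x) 1⟧ - ⟦up⟧)
            - ((⟦nim ((N : ℕ) : Ordinal)⟧ : Game) + ⟦up⟧)
          = ((⟦ordinalSum (superstar x) 1⟧ + -⟦nim ((N : ℕ) : Ordinal)⟧)
            + ⟦MFProof.dn⟧) + ⟦MFProof.dn⟧ := by
        rw [MFProof.g_dn]; abel
      rw [e, MFProof.g_nim_neg]
      exact hB
  constructor
  · refine ⟨(Finset.univ.sum x) + m + 3, fun N hN => ?_⟩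
    obtain ⟨key1, key2⟩ := main N hN
    constructor
    · rw [lt_iff_game_lt]
      simp only [quot_add, quot_neg, quot_sub]
      rw [hU1, ← sub_eq_add_neg]
      exact sub_lt_sub_right key1 _
    · rw [lt_iff_game_lt]
      simp only [quot_add, quot_neg, quot_sub]
      rw [hU1]
      exact key2
  · refine ⟨(Finset.univ.sum x) + m + 3, fun N hN => ?_⟩
    obtain ⟨key1, key2⟩ := main N hN
    rw [hneg]
    constructor
    · rw [lt_iff_game_lt]
      simp only [quot_add, quot_neg, quot_sub]
      rw [hU2, sub_neg_eq_add, ← sub_eq_add_neg]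
      have h := neg_lt_neg key2
      have e1 : -((⟦nim ((N : ℕ) : Ordinal)⟧ : Game) + ⟦up⟧)
          = ⟦nim ((N : ℕ) : Ordinal)⟧ - ⟦up⟧ := by
        rw [neg_add, MFProof.g_nim_neg, ← sub_eq_add_neg]
      have e2 : -((⟦ordinalSum (superstar x) 1⟧ : Game) - ⟦up⟧)
          = -⟦ordinalSum (superstar x) 1⟧ + ⟦up⟧ := by abel
      rwa [e1, e2] at h
    · rw [lt_iff_game_lt]
      simp only [quot_add, quot_neg, quot_sub]
      rw [hU2, sub_neg_eq_add]
      refine add_lt_add_of_lt_of_le ?_ le_rfl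
      have h := neg_lt_neg key1
      rwa [MFProof.g_nim_neg] at h
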